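/- Define Ψₓ : ℂ² → ℂ³ by Ψₓ(u,v) = (u²v + uv² + 1, u + v + u²v², uv) and Ψ_y(u,v) = (u + v + u²v², u²v + uv² + 1, uv). Then for the homogeneous deltoid map F(x,y,z) = (y² - 2xz, x² - 2yz, z²), one has F(Ψₓ(u,v)) = Ψ_y(u², v²) as points of ℂ³ (equality of coordinate triples). -/
import Mathlib


def Ψx (u v : ℂ) : ℂ × ℂ × ℂ := (u^2*v + u*v^2 + 1, u + v + u^2*v^2, u*v)

def Ψy (u v : ℂ) : ℂ × ℂ × ℂ := (u + v + u^2*v^2, u^2*v + u*v^2 + 1, u*v)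

def F (p : ℂ × ℂ × ℂ) : ℂ × ℂ × ℂ :=
  (p.2.1^2 - 2*p.1*p.2.2, p.1^2 - 2*p.2.1*p.2.2, p.2.2^2)

theorem semiconjugacy (u v : ℂ) : F (Ψx u v) = Ψy (u^2) (v^2) := by
  simp only [F, Ψx, Ψy]; refine Prod.ext (by ring) (Prod.ext (by ring) (by ring))
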